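/- For every natural number k ≥ 0, π/4 = 2·arctan(1/φ^{2k+1}) + arctan((L_{2k+1} − 2)/(L_{2k+1} + 2)). -/

import Mathlib

open Real

/-- The Lucas numbers: `L 0 = 2`, `L 1 = 1`, `L (n+2) = L (n+1) + L n`. -/
def L : ℕ → ℝ
  | 0 => 2
  | 1 => 1
  | (n + 2) => L (n + 1) + L n

/-- The golden ratio `φ = (1 + √5)/2`. -/
noncomputable def phi : ℝ := (1 + Real.sqrt 5) / 2

/-!
Put `x = φ ^ (2k+1)`. Since `ψ = -φ⁻¹` and the exponent is odd, Binet's formula gives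
`L (2k+1) = x - x⁻¹`, so the claim is an identity in `x > 1`. Doubling `arctan x⁻¹` yields
`arctan u` with `u = 2x / (x² - 1)`, and the second argument is `(1 - u) / (1 + u)`, whose
arctangent is `π/4 - arctan u`.
-/

open scoped goldenRatio

lemma phi_eq_goldenRatio : phi = φ := rfl

lemma L_eq_goldenRatio_pow_add_goldenConj_pow (n : ℕ) : L n = φ ^ n + ψ ^ n := by
  induction n using L.induct with
  | case1 => norm_num [L]
  | case2 => simp [L, goldenRatio_add_goldenConj]
  | case3 n ih₁ ih₀ =>
    show L (n + 2) = φ ^ (n + 2) + ψ ^ (n + 2)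
    rw [L, ih₁, ih₀]
    linear_combination (-φ ^ n) * goldenRatio_sq - ψ ^ n * goldenConj_sq

lemma L_two_mul_add_one (k : ℕ) :
    L (2 * k + 1) = φ ^ (2 * k + 1) - (φ ^ (2 * k + 1))⁻¹ := by
  rw [L_eq_goldenRatio_pow_add_goldenConj_pow, ← inv_pow, inv_goldenRatio,
    Odd.neg_pow ⟨k, rfl⟩, sub_neg_eq_add]

lemma arctan_one_sub_div_one_add {u : ℝ} (hu : -1 < u) :
    arctan ((1 - u) / (1 + u)) = π / 4 - arctan u := by
  have hu' : 0 < 1 + u := by linarith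
  have hprod : u * ((1 - u) / (1 + u)) < 1 := by
    rw [mul_div_assoc', div_lt_one hu']
    nlinarith [sq_nonneg u]
  rw [eq_sub_iff_add_eq', arctan_add hprod, ← arctan_one]
  congr 1
  rw [div_eq_one_iff_eq (by linarith)]
  field_simp
  ring

lemma two_mul_arctan_inv_add_arctan {x : ℝ} (hx : 1 < x) :
    2 * arctan x⁻¹ + arctan ((x - x⁻¹ - 2) / (x - x⁻¹ + 2)) = π / 4 := by
  have hx₀ : 0 < x := by linarith
  have hinv : x⁻¹ < 1 := inv_lt_one_of_one_lt₀ hx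
  have hinv₀ : 0 < x⁻¹ := inv_pos.mpr hx₀
  set u := 2 * x⁻¹ / (1 - x⁻¹ ^ 2)
  have hu : 0 < u := div_pos (by positivity) (by nlinarith)
  have harg : (x - x⁻¹ - 2) / (x - x⁻¹ + 2) = (1 - u) / (1 + u) := by
    have : x ^ 2 - 1 ≠ 0 := by nlinarith
    have : x ^ 2 + 2 * x - 1 ≠ 0 := by nlinarith
    simp only [u]
    field_simp
  rw [two_mul_arctan (by linarith) hinv, harg, arctan_one_sub_div_one_add (by linarith)]
  ring

theorem pi_four_eq_arctan_phi_odd (k : ℕ) :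
    π / 4 = 2 * arctan (1 / phi ^ (2 * k + 1)) +
      arctan ((L (2 * k + 1) - 2) / (L (2 * k + 1) + 2)) := by
  rw [L_two_mul_add_one, phi_eq_goldenRatio, one_div]
  exact (two_mul_arctan_inv_add_arctan (one_lt_pow₀ one_lt_goldenRatio (by omega))).symm
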